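/- Let P be a closed polygonal loop with vertices y₁, …, yₘ ∈ ℝ² (listed cyclically) whose edges are struts each carrying a compressive (non-negative) axial force, in equilibrium with external forces applied at the vertices. Then P cannot lie entirely in the open half-plane on one side of a supporting line of the convex hull of the external force application points; consequently a strut loop under compression cannot extend outside the convex hull of the points where forces are applied. -/
import Mathlib

def dot2 (a b : ℝ × ℝ) : ℝ := a.1 * b.1 + a.2 * b.2

lemma dot2_add_right (a u w : ℝ × ℝ) : dot2 a (u + w) = dot2 a u + dot2 a w := by
  simp [dot2]; ring

lemma dot2_smul_right (a b : ℝ × ℝ) (r : ℝ) : dot2 a (r • b) = r * dot2 a b := by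
  simp [dot2]; ring

lemma dot2_sub_left (a b e : ℝ × ℝ) : dot2 a e - dot2 b e = dot2 (a - b) e := by
  simp [dot2]; ring

lemma dot2_self_pos {e : ℝ × ℝ} (he : e ≠ 0) : 0 < dot2 e e := by
  have : e.1 ≠ 0 ∨ e.2 ≠ 0 := by
    by_contra hcon
    push_neg at hcon
    exact he (Prod.ext hcon.1 hcon.2)
  unfold dot2
  rcases this with h | h
  · nlinarith [mul_self_pos.2 h, mul_self_nonneg e.2]
  · nlinarith [mul_self_pos.2 h, mul_self_nonneg e.1]

/-- A closed polygonal loop of struts under compression, in equilibrium with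
external forces applied only at points lying in the convex hull Ω of the force
application points, cannot lie entirely in the open half-plane beyond a
supporting line of Ω. -/
theorem strut_loop_not_beyond_supporting_line
    {m n : ℕ} [NeZero m] (y : ZMod m → ℝ × ℝ) (c : ZMod m → ℝ)
    (f : ZMod m → ℝ × ℝ) (x : Fin n → ℝ × ℝ)
    (hedge : ∀ j, y j ≠ y (j + 1))
    (hc : ∀ j, 0 ≤ c j) (hcpos : ∃ j, 0 < c j)
    (hequil : ∀ j, f j + (c j / ‖y j - y (j + 1)‖) • (y j - y (j + 1)) +
      (c (j - 1) / ‖y j - y (j - 1)‖) • (y j - y (j - 1)) = 0)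
    (hext : ∀ j, f j ≠ 0 → y j ∈ convexHull ℝ (Set.range x))
    (v : ℝ × ℝ) (d : ℝ)
    (hsupp : ∀ z ∈ convexHull ℝ (Set.range x), dot2 v z ≤ d) :
    ¬ (∀ j, d < dot2 v (y j)) := by
  intro h
  have hf : ∀ j, f j = 0 := by
    intro j
    by_contra hfj
    exact absurd (hsupp _ (hext j hfj)) (not_le.2 (h j))
  -- dot each equilibrium equation with y j
  have key : ∀ j, (c j / ‖y j - y (j + 1)‖) * dot2 (y j) (y j - y (j + 1))
      + (c (j - 1) / ‖y j - y (j - 1)‖) * dot2 (y j) (y j - y (j - 1)) = 0 := by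
    intro j
    have h1 := hequil j
    rw [hf j, zero_add] at h1
    have h2 := congrArg (dot2 (y j)) h1
    rw [dot2_add_right, dot2_smul_right, dot2_smul_right] at h2
    simpa [dot2] using h2
  have hsum0 : (∑ j : ZMod m, (c j / ‖y j - y (j + 1)‖) * dot2 (y j) (y j - y (j + 1)))
      + ∑ j : ZMod m, (c (j - 1) / ‖y j - y (j - 1)‖) * dot2 (y j) (y j - y (j - 1)) = 0 := by
    rw [← Finset.sum_add_distrib]
    exact Finset.sum_eq_zero fun j _ => key j
  have hre : (∑ j : ZMod m, (c (j - 1) / ‖y j - y (j - 1)‖) * dot2 (y j) (y j - y (j - 1)))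
      = ∑ j : ZMod m, (c j / ‖y j - y (j + 1)‖) * dot2 (y (j + 1)) (y (j + 1) - y j) := by
    apply Fintype.sum_equiv (Equiv.subRight (1 : ZMod m))
    intro j
    simp only [Equiv.subRight_apply, sub_add_cancel, norm_sub_rev (y j) (y (j - 1))]
  have hfinal : (∑ j : ZMod m, (c j / ‖y j - y (j + 1)‖)
      * dot2 (y j - y (j + 1)) (y j - y (j + 1))) = 0 := by
    rw [← hsum0, hre, ← Finset.sum_add_distrib]
    apply Finset.sum_congr rfl
    intro j _
    have : dot2 (y (j + 1)) (y (j + 1) - y j) = - dot2 (y (j + 1)) (y j - y (j + 1)) := by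
      simp [dot2]; ring
    rw [this]
    rw [show (c j / ‖y j - y (j + 1)‖) * dot2 (y j) (y j - y (j + 1))
        + (c j / ‖y j - y (j + 1)‖) * (- dot2 (y (j + 1)) (y j - y (j + 1)))
        = (c j / ‖y j - y (j + 1)‖) * (dot2 (y j) (y j - y (j + 1))
          - dot2 (y (j + 1)) (y j - y (j + 1))) by ring, dot2_sub_left]
  -- each summand is nonneg, and positive at the witness of hcpos
  obtain ⟨j₀, hj₀⟩ := hcpos
  have hne : ∀ j : ZMod m, y j - y (j + 1) ≠ 0 := fun j => sub_ne_zero.2 (hedge j)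
  have hterm : ∀ j ∈ Finset.univ, (0:ℝ) ≤ (c j / ‖y j - y (j + 1)‖)
      * dot2 (y j - y (j + 1)) (y j - y (j + 1)) := by
    intro j _
    exact mul_nonneg (div_nonneg (hc j) (norm_nonneg _)) (dot2_self_pos (hne j)).le
  have := (Finset.sum_eq_zero_iff_of_nonneg hterm).1 hfinal j₀ (Finset.mem_univ _)
  have hpos : 0 < (c j₀ / ‖y j₀ - y (j₀ + 1)‖)
      * dot2 (y j₀ - y (j₀ + 1)) (y j₀ - y (j₀ + 1)) :=
    mul_pos (div_pos hj₀ (norm_pos_iff.2 (hne j₀))) (dot2_self_pos (hne j₀))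
  exact hpos.ne' this
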